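/- arXiv:2602.12802 — 2 statements merged into one kernel-verified Lean document; each statement's English description precedes it below -/
import Mathlib

section
/- Let I = [θ₁, θ₂] ⊆ (0, π) be a closed interval and let η : [θ₁, θ₂] → ℝ be continuously differentiable with η(θ₁) = η(θ₂) = 0. Suppose there is a constant C > 0 such that C · (sin θ)² · (η'(θ))² = η(θ)⁶ for all θ ∈ [θ₁, θ₂]. Then η vanishes identically on [θ₁, θ₂]. -/
/-- if a C¹ function η on [θ₁,θ₂] ⊆ (0,π) vanishes at both endpoints and
satisfies C·(sin θ)²·(η'(θ))² = η(θ)⁶ with C > 0, then η ≡ 0 on [θ₁,θ₂]. -/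
theorem stmt_0 (θ₁ θ₂ : ℝ) (hθ₁ : 0 < θ₁) (hθ₂ : θ₂ < Real.pi) (hle : θ₁ ≤ θ₂)
    (η η' : ℝ → ℝ)
    (hderiv : ∀ θ ∈ Set.Icc θ₁ θ₂, HasDerivAt η (η' θ) θ)
    (hcont : ContinuousOn η' (Set.Icc θ₁ θ₂))
    (h1 : η θ₁ = 0) (h2 : η θ₂ = 0)
    (C : ℝ) (hC : 0 < C)
    (hODE : ∀ θ ∈ Set.Icc θ₁ θ₂, C * (Real.sin θ) ^ 2 * (η' θ) ^ 2 = (η θ) ^ 6) :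
    ∀ θ ∈ Set.Icc θ₁ θ₂, η θ = 0 := by
  have hne : (Set.Icc θ₁ θ₂).Nonempty := ⟨θ₁, by simp [hle]⟩
  have hηcont : ContinuousOn η (Set.Icc θ₁ θ₂) :=
    fun θ hθ => ((hderiv θ hθ).continuousAt).continuousWithinAt
  -- positive lower bound on sin
  obtain ⟨θ₀, hθ₀, hmin⟩ := isCompact_Icc.exists_isMinOn hne
    Real.continuous_sin.continuousOn
  set m : ℝ := Real.sin θ₀ with hm
  have hm0 : 0 < m := Real.sin_pos_of_pos_of_lt_pi
    (lt_of_lt_of_le hθ₁ hθ₀.1) (lt_of_le_of_lt hθ₀.2 hθ₂)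
  have hsin : ∀ θ ∈ Set.Icc θ₁ θ₂, m ≤ Real.sin θ := fun θ hθ => hmin hθ
  -- bound on |η|
  obtain ⟨M, hM⟩ := isCompact_Icc.exists_bound_of_continuousOn hηcont
  have hM0 : 0 ≤ M := le_trans (norm_nonneg _) (hM θ₁ ⟨le_refl _, hle⟩)
  have hsC : 0 < Real.sqrt C := Real.sqrt_pos.mpr hC
  set K : ℝ := M ^ 2 / (Real.sqrt C * m) with hK
  -- key bound |η'| ≤ K |η|
  have key : ∀ θ ∈ Set.Icc θ₁ θ₂, ‖η' θ‖ ≤ K * ‖η θ‖ := by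
    intro θ hθ
    have hsθ : 0 < Real.sin θ := lt_of_lt_of_le hm0 (hsin θ hθ)
    have heq : Real.sqrt C * Real.sin θ * |η' θ| = |η θ| ^ 3 := by
      have h1 : (Real.sqrt C * Real.sin θ * |η' θ|) ^ 2 = (|η θ| ^ 3) ^ 2 := by
        have hC2 : Real.sqrt C ^ 2 = C := Real.sq_sqrt hC.le
        have := hODE θ hθ
        calc (Real.sqrt C * Real.sin θ * |η' θ|) ^ 2
            = Real.sqrt C ^ 2 * Real.sin θ ^ 2 * |η' θ| ^ 2 := by ring
          _ = C * Real.sin θ ^ 2 * (η' θ) ^ 2 := by rw [hC2, sq_abs]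
          _ = (η θ) ^ 6 := this
          _ = (|η θ| ^ 3) ^ 2 := by rw [← abs_pow, sq_abs, ← pow_mul]
      have ha : 0 ≤ Real.sqrt C * Real.sin θ * |η' θ| :=
        mul_nonneg (mul_nonneg hsC.le hsθ.le) (abs_nonneg _)
      have hb : 0 ≤ |η θ| ^ 3 := pow_nonneg (abs_nonneg _) 3
      calc Real.sqrt C * Real.sin θ * |η' θ|
          = Real.sqrt ((Real.sqrt C * Real.sin θ * |η' θ|) ^ 2) :=
            (Real.sqrt_sq ha).symm
        _ = Real.sqrt ((|η θ| ^ 3) ^ 2) := by rw [h1]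
        _ = |η θ| ^ 3 := Real.sqrt_sq hb
    have hMb : |η θ| ≤ M := hM θ hθ
    have h3 : |η θ| ^ 3 ≤ M ^ 2 * |η θ| := by
      have : |η θ| ^ 2 ≤ M ^ 2 := pow_le_pow_left₀ (abs_nonneg _) hMb 2
      calc |η θ| ^ 3 = |η θ| ^ 2 * |η θ| := by ring
        _ ≤ M ^ 2 * |η θ| := mul_le_mul_of_nonneg_right this (abs_nonneg _)
    have h4 : Real.sqrt C * m * |η' θ| ≤ Real.sqrt C * Real.sin θ * |η' θ| := by
      apply mul_le_mul_of_nonneg_right _ (abs_nonneg _)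
      exact mul_le_mul_of_nonneg_left (hsin θ hθ) hsC.le
    have h5 : Real.sqrt C * m * |η' θ| ≤ M ^ 2 * |η θ| :=
      le_trans h4 (heq ▸ h3)
    have hpos : 0 < Real.sqrt C * m := mul_pos hsC hm0
    rw [Real.norm_eq_abs, Real.norm_eq_abs, hK, div_mul_eq_mul_div,
      le_div_iff₀ hpos]
    linarith [h5]
  -- Grönwall
  intro θ hθ
  have hf : ContinuousOn η (Set.Icc θ₁ θ₂) := hηcont
  have hf' : ∀ t ∈ Set.Ico θ₁ θ₂, HasDerivWithinAt η (η' t) (Set.Ici t) t :=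
    fun t ht => (hderiv t ⟨ht.1, ht.2.le⟩).hasDerivWithinAt
  have hbound : ∀ t ∈ Set.Ico θ₁ θ₂, ‖η' t‖ ≤ K * ‖η t‖ + 0 :=
    fun t ht => by simpa using key t ⟨ht.1, ht.2.le⟩
  have ha : ‖η θ₁‖ ≤ 0 := by simp [h1]
  have := norm_le_gronwallBound_of_norm_deriv_right_le hf hf' ha hbound θ hθ
  have h0 : gronwallBound 0 K 0 (θ - θ₁) = 0 := by
    simp [gronwallBound_ε0]
  rw [h0] at this
  exact norm_eq_zero.mp (le_antisymm this (norm_nonneg _))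
end

section
/- Let η : ℝ → ℝ be real analytic on an interval [a, b] with η(a) = η(b) = 0109, and suppose g : [a,b] → ℝ is continuous with g > 0 on (a,b), and g(θ)·(η'(θ))² = η(θ)⁶ for all θ ∈ [a,b]. If η is not identically zero then η has two consecutive zeros θ₁ < θ₂ in [a,b] with η nonzero on (θ₁, θ₂); but then by the mean value theorem there exists θ* ∈ (θ₁, θ₂) with η'(θ*) = 0, hence η(θ*)⁶ = g(θ*)·(η'(θ*))² = 0, so η(θ*) = 0, a contradiction. Therefore η ≡ 0 on [a,b]. -/
/-- a real-analytic η on [a,b] vanishing at the endpoints and satisfying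
g·(η')² = η⁶ with g continuous, g > 0 on (a,b), vanishes identically on [a,b]. -/
theorem stmt_1 (a b : ℝ) (hab : a < b) (η g : ℝ → ℝ)
    (hη : AnalyticOnNhd ℝ η (Set.Icc a b))
    (ha : η a = 0) (hb : η b = 0)
    (hg : ContinuousOn g (Set.Icc a b))
    (hgpos : ∀ θ ∈ Set.Ioo a b, 0 < g θ)
    (hODE : ∀ θ ∈ Set.Icc a b, g θ * (deriv η θ) ^ 2 = (η θ) ^ 6) :
    ∀ θ ∈ Set.Icc a b, η θ = 0 := by
  intro θ₀ hθ₀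
  by_contra hne
  have hcont : ContinuousOn η (Set.Icc a b) := hη.continuousOn
  -- nearest zero to the left
  set Z₁ : Set ℝ := {x | x ∈ Set.Icc a θ₀ ∧ η x = 0} with hZ₁
  have hZ₁closed : IsClosed Z₁ := by
    have : Z₁ = Set.Icc a θ₀ ∩ η ⁻¹' {0} := by
      ext x; simp [hZ₁, Set.mem_inter_iff, and_comm]
    rw [this]
    exact (hcont.mono (Set.Icc_subset_Icc le_rfl hθ₀.2)).preimage_isClosed_of_isClosed
      isClosed_Icc isClosed_singleton
  have hZ₁ne : Z₁.Nonempty := ⟨a, ⟨le_rfl, hθ₀.1⟩, ha⟩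
  have hZ₁bdd : BddAbove Z₁ := ⟨θ₀, fun x hx => hx.1.2⟩
  set c := sSup Z₁ with hc
  have hcmem : c ∈ Z₁ := hZ₁closed.csSup_mem hZ₁ne hZ₁bdd
  have hcθ₀ : c ≤ θ₀ := hcmem.1.2
  have hclt : c < θ₀ := lt_of_le_of_ne hcθ₀ (fun h => hne (h ▸ hcmem.2))
  -- nearest zero to the right
  set Z₂ : Set ℝ := {x | x ∈ Set.Icc θ₀ b ∧ η x = 0} with hZ₂
  have hZ₂closed : IsClosed Z₂ := by
    have : Z₂ = Set.Icc θ₀ b ∩ η ⁻¹' {0} := by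
      ext x; simp [hZ₂, Set.mem_inter_iff, and_comm]
    rw [this]
    exact (hcont.mono (Set.Icc_subset_Icc hθ₀.1 le_rfl)).preimage_isClosed_of_isClosed
      isClosed_Icc isClosed_singleton
  have hZ₂ne : Z₂.Nonempty := ⟨b, ⟨hθ₀.2, le_rfl⟩, hb⟩
  have hZ₂bdd : BddBelow Z₂ := ⟨θ₀, fun x hx => hx.1.1⟩
  set d := sInf Z₂ with hd
  have hdmem : d ∈ Z₂ := hZ₂closed.csInf_mem hZ₂ne hZ₂bdd
  have hθ₀d : θ₀ ≤ d := hdmem.1.1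
  have hdlt : θ₀ < d := lt_of_le_of_ne hθ₀d (fun h => hne (h ▸ hdmem.2))
  have hcd : c < d := hclt.trans hdlt
  have hca : a ≤ c := hcmem.1.1
  have hdb : d ≤ b := hdmem.1.2
  -- η nonzero on (c, d)
  have hnz : ∀ x ∈ Set.Ioo c d, η x ≠ 0 := by
    intro x hx hx0
    rcases le_or_gt x θ₀ with h | h
    · have : x ∈ Z₁ := ⟨⟨hca.trans hx.1.le, h⟩, hx0⟩
      exact absurd (le_csSup hZ₁bdd this) (not_le.mpr hx.1)
    · have : x ∈ Z₂ := ⟨⟨h.le, hx.2.le.trans hdb⟩, hx0⟩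
      exact absurd (csInf_le hZ₂bdd this) (not_le.mpr hx.2)
  -- Rolle on [c, d]
  have hsub : Set.Icc c d ⊆ Set.Icc a b := Set.Icc_subset_Icc hca hdb
  obtain ⟨θs, hθs, hderiv⟩ := exists_deriv_eq_zero hcd (hcont.mono hsub)
    (hcmem.2.trans hdmem.2.symm)
  have hθsab : θs ∈ Set.Ioo a b :=
    ⟨hca.trans_lt hθs.1, hθs.2.trans_le hdb⟩
  have := hODE θs ⟨hθsab.1.le, hθsab.2.le⟩
  rw [hderiv] at this
  have hη6 : (η θs) ^ 6 = 0 := by linarith [this]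
  exact hnz θs hθs (by nlinarith [pow_eq_zero_iff (n := 6) (by norm_num) |>.mp hη6])
end
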